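/- Let C = FLRS[γ, a, h; N, k] be a folded linearized Reed–Solomon code with the same folding parameter h for all ℓ blocks, folded block lengths N_1, ..., N_ℓ summing to N, and dimension k ≤ hN. Assume h divides k. Then the minimum sum-rank distance of C equals N − k/h + 1, i.e., C is a maximum sum-rank distance (MSRD) code. -/

import Mathlib

/-- Iterated generalized operator `D_a^r(b)` for zero derivation: `D_a(b) = σ(b)·a`. -/
def Dit {F : Type*} [Field F] (σ : F ≃+* F) (a b : F) : ℕ → F
  | 0 => b
  | r + 1 => σ (Dit σ a b r) * a

/-- Generalized operator evaluation of a skew polynomial at `b` w.r.t. parameter `a`. -/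
noncomputable def opev {F : Type*} [Field F] (σ : F ≃+* F) (f : Polynomial F)
    (a b : F) : F :=
  ∑ r ∈ f.support, f.coeff r * Dit σ a b r

/-- The fixed subfield `F_q` of the automorphism `σ`. -/
def fixedSubfield {F : Type*} [Field F] (σ : F ≃+* F) : Subfield F where
  carrier := {x | σ x = x}
  mul_mem' := by
    intro a b (ha : σ a = a) (hb : σ b = b)
    show σ (a * b) = a * b
    rw [map_mul, ha, hb]
  one_mem' := by show σ 1 = 1; simp
  add_mem' := by
    intro a b (ha : σ a = a) (hb : σ b = b)
    show σ (a + b) = a + b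
    rw [map_add, ha, hb]
  zero_mem' := by show σ 0 = 0; simp
  neg_mem' := by
    intro a (ha : σ a = a)
    show σ (-a) = -a
    rw [map_neg, ha]
  inv_mem' := by
    intro a (ha : σ a = a)
    show σ a⁻¹ = a⁻¹
    rw [map_inv₀, ha]

/-- The `F_q`-rank of a matrix over `F_{q^m}`: the dimension over the fixed subfield
of the span of its columns. -/
noncomputable def colRank {F : Type*} [Field F] (σ : F ≃+* F) {h N : ℕ}
    (M : Matrix (Fin h) (Fin N) F) : ℕ :=
  Module.finrank (fixedSubfield σ)
    (Submodule.span (fixedSubfield σ) (Set.range fun j : Fin N => fun r : Fin h => M r j))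

/-!
For a nonzero skew polynomial `f`, the `F_q`-dimensions of the root spaces
`ker (b ↦ f(b)_{a_i})` add up to at most `deg f`. This goes by induction on the degree: for a
root `β` at `a_i`, divide `f` on the right by `x - c` with `c = σ(β) a_i β⁻¹`; the root spaces of
`x - c` are trivial except at the single class `a_i`, where they have dimension `≤ 1`.
A column relation in the `i`-th block of the codeword of `f` gives `h` independent roots at `a_i`
(the powers `γ^j`, `j < m`, are independent), hence `h · (N - wt) ≤ deg f < k`, which is the
lower bound `wt ≥ N - k/h + 1`. Conversely a nonzero `f` of degree `< k` can be chosen to vanish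
on the `(k/h - 1) · h < k` points of any `k/h - 1` columns, so the bound is attained.
-/

open Polynomial Module Finset

theorem LinearMap.finrank_comap_le {K V W : Type*} [DivisionRing K] [AddCommGroup V] [Module K V]
    [AddCommGroup W] [Module K W] [FiniteDimensional K V] (f : V →ₗ[K] W) (p : Submodule K W)
    [FiniteDimensional K p] :
    finrank K (p.comap f) ≤ finrank K p + finrank K (LinearMap.ker f) := by
  have h := f.lift_rank_comap_le p
  rw [← finrank_eq_rank, ← finrank_eq_rank, ← finrank_eq_rank] at h
  simpa only [Cardinal.lift_natCast, ← Nat.cast_add, Nat.cast_le] using h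

section Powers

open IntermediateField

variable {K L : Type*} [Field K] [Field L] [Algebra K L]

lemma adjoin_simple_eq_top_of_forall_eq_pow {γ : L} (hγ : ∀ x : L, x ≠ 0 → ∃ j : ℕ, x = γ ^ j) :
    K⟮γ⟯ = ⊤ := by
  refine eq_top_iff.2 fun x _ => ?_
  obtain rfl | hx := eq_or_ne x 0
  · exact zero_mem _
  obtain ⟨j, rfl⟩ := hγ x hx
  exact pow_mem (mem_adjoin_simple_self K γ) j

lemma linearIndependent_pow_of_adjoin_eq_top [FiniteDimensional K L] {γ : L} (hγ : K⟮γ⟯ = ⊤) :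
    LinearIndependent K (fun e : Fin (finrank K L) => γ ^ (e : ℕ)) := by
  have hdeg : (minpoly K γ).natDegree = finrank K L := by
    rw [← adjoin.finrank (IsIntegral.of_finite K γ), hγ, finrank_top']
  rw [← hdeg]
  exact linearIndependent_pow γ

lemma linearIndependent_pow_mul_add [FiniteDimensional K L] {γ : L} (hγ : K⟮γ⟯ = ⊤) {h N : ℕ}
    (hhN : h * N ≤ finrank K L) :
    LinearIndependent K (fun p : Fin N × Fin h => γ ^ ((p.1 : ℕ) * h + p.2)) := by
  have hNh : N * h ≤ finrank K L := by rwa [mul_comm]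
  have hinj : Function.Injective (Fin.castLE hNh ∘ finProdFinEquiv) :=
    (Fin.castLE_injective _).comp finProdFinEquiv.injective
  convert (linearIndependent_pow_of_adjoin_eq_top hγ).comp _ hinj using 2 with p
  simp only [Function.comp_apply, Fin.val_castLE, finProdFinEquiv_apply_val]
  ring_nf

end Powers

/-- Each column relation `l` yields `h` independent kernel vectors `∑ c, l c • x (c, r)`. -/
theorem mul_sub_finrank_span_cols_le_finrank_ker {K V W : Type*} [Field K] [AddCommGroup V]
    [Module K V] [AddCommGroup W] [Module K W] [FiniteDimensional K V] {h N : ℕ}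
    (L : V →ₗ[K] W) {x : Fin N × Fin h → V} (hx : LinearIndependent K x)
    (M : Matrix (Fin h) (Fin N) W) (hM : ∀ r c, M r c = L (x (c, r))) :
    h * (N - finrank K (Submodule.span K (Set.range fun c r => M r c))) ≤
      finrank K (LinearMap.ker L) := by
  set φ := Fintype.linearCombination K (fun c r => M r c)
  have hnullity : N - finrank K (Submodule.span K (Set.range fun c r => M r c)) =
      finrank K (LinearMap.ker φ) := by
    have hrn := φ.finrank_range_add_finrank_ker
    rw [Fintype.range_linearCombination, finrank_fin_fun] at hrn
    omega
  let reindex : (Fin h → LinearMap.ker φ) →ₗ[K] (Fin N × Fin h → K) :=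
    LinearMap.pi fun p => LinearMap.proj p.1 ∘ₗ (LinearMap.ker φ).subtype ∘ₗ LinearMap.proj p.2
  let Θ := Fintype.linearCombination K x ∘ₗ reindex
  have hΘ : Function.Injective Θ := by
    refine (linearIndependent_iff_injective_fintypeLinearCombination.1 hx).comp fun v w hvw => ?_
    funext r
    exact Subtype.ext (funext fun c => congrFun hvw (c, r))
  have hΘL : ∀ v, Θ v ∈ LinearMap.ker L := by
    intro v
    have hv : ∀ r, ∑ c, (v r : Fin N → K) c • M r c = 0 := fun r => by
      have h0 : φ (v r) r = 0 := congrFun (LinearMap.mem_ker.1 (v r).2) r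
      rwa [Fintype.linearCombination_apply, Finset.sum_apply] at h0
    simp [Θ, reindex, Fintype.linearCombination_apply, Fintype.sum_prod_type_right, ← hM, hv]
  have := LinearMap.finrank_le_finrank_of_injective (f := Θ.codRestrict _ hΘL)
    (fun v w hvw => hΘ (congrArg Subtype.val hvw))
  simpa [hnullity, Module.finrank_pi_fintype] using this

lemma finrank_span_range_le_card {K V ι : Type*} [DivisionRing K] [AddCommGroup V] [Module K V]
    (v : ι → V) (T : Finset ι) (hT : ∀ c ∉ T, v c = 0) :
    finrank K (Submodule.span K (Set.range v)) ≤ #T := by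
  classical
  have hspan : Submodule.span K (Set.range v) ≤ Submodule.span K (T.image v : Set V) := by
    refine Submodule.span_le.2 ?_
    rintro _ ⟨c, rfl⟩
    by_cases hc : c ∈ T
    · exact Submodule.subset_span (mem_image_of_mem v hc)
    · simp [hT c hc]
  calc finrank K (Submodule.span K (Set.range v)) ≤ _ := Submodule.finrank_mono hspan
    _ ≤ #(T.image v) := finrank_span_finset_le_card _
    _ ≤ #T := card_image_le

@[simp] lemma colRank_zero {F : Type*} [Field F] (σ : F ≃+* F) {h N : ℕ} :
    colRank σ (0 : Matrix (Fin h) (Fin N) F) = 0 := by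
  rw [colRank, Submodule.span_eq_bot.2, finrank_bot]
  rintro _ ⟨j, rfl⟩
  rfl

section OperatorEvaluation

variable {F : Type*} [Field F] (σ : F ≃+* F)

lemma Dit_add (a x y : F) (r : ℕ) : Dit σ a (x + y) r = Dit σ a x r + Dit σ a y r := by
  induction r with
  | zero => rfl
  | succ r ih => simp only [Dit, ih, map_add, add_mul]

lemma Dit_mul_of_fixed (a : F) {c : F} (hc : σ c = c) (x : F) (r : ℕ) :
    Dit σ a (c * x) r = c * Dit σ a x r := by
  induction r with
  | zero => rfl
  | succ r ih => simp only [Dit, ih, map_mul, hc, mul_assoc]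

lemma Dit_sub_mul (a c b : F) (n : ℕ) :
    Dit σ a (σ b * a - c * b) n = Dit σ a b (n + 1) - (⇑σ)^[n] c * Dit σ a b n := by
  induction n with
  | zero => rfl
  | succ n ih =>
    rw [Dit, ih, Function.iterate_succ_apply']
    simp only [Dit, map_sub, map_mul]
    ring

noncomputable def lopev (a b : F) : F[X] →ₗ[F] F :=
  lsum fun n => LinearMap.mulRight F (Dit σ a b n)

lemma lopev_apply (a b : F) (f : F[X]) : lopev σ a b f = opev σ f a b := rfl

lemma opev_sub (f g : F[X]) (a b : F) : opev σ (f - g) a b = opev σ f a b - opev σ g a b :=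
  map_sub (lopev σ a b) f g

lemma opev_add (f g : F[X]) (a b : F) : opev σ (f + g) a b = opev σ f a b + opev σ g a b :=
  map_add (lopev σ a b) f g

@[simp] lemma opev_zero (a b : F) : opev σ 0 a b = 0 := map_zero (lopev σ a b)

@[simp] lemma opev_monomial (n : ℕ) (x a b : F) : opev σ (monomial n x) a b = x * Dit σ a b n := by
  rw [← lopev_apply, lopev, lsum_apply, sum_monomial_index] <;> simp

lemma opev_C (x a b : F) : opev σ (C x) a b = x * b := by
  rw [← monomial_zero_left, opev_monomial]; rfl

lemma opev_X_sub_C (c a b : F) : opev σ (X - C c) a b = σ b * a - c * b := by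
  rw [opev_sub, ← monomial_one_one_eq_X, opev_monomial, opev_C, one_mul]; rfl

noncomputable def opevLinearMap (f : F[X]) (a : F) : F →ₗ[fixedSubfield σ] F where
  toFun := opev σ f a
  map_add' x y := by simp only [opev, Dit_add, mul_add, Finset.sum_add_distrib]
  map_smul' c x := by
    simp only [opev, Subfield.smul_def, smul_eq_mul, RingHom.id_apply, Finset.mul_sum,
      Dit_mul_of_fixed σ a c.2]
    exact Finset.sum_congr rfl fun _ _ => by ring

@[simp] lemma opevLinearMap_apply (f : F[X]) (a b : F) : opevLinearMap σ f a b = opev σ f a b := rfl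

@[simp] lemma opev_at_zero (f : F[X]) (a : F) : opev σ f a 0 = 0 := map_zero (opevLinearMap σ f a)

lemma opev_monomial_succ (c : F) (n : ℕ) (x a b : F) :
    opev σ (monomial (n + 1) x) a b =
      opev σ (monomial n x) a (σ b * a - c * b) + opev σ (monomial n (x * (⇑σ)^[n] c)) a b := by
  simp only [opev_monomial, Dit_sub_mul]
  ring

lemma exists_opev_eq_opev_monomial_add (c : F) (n : ℕ) {f : F[X]} (hf : f.natDegree ≤ n + 1) :
    ∃ f₁ : F[X], f₁.natDegree ≤ n ∧ ∀ a b, opev σ f a b =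
      opev σ (monomial n (f.coeff (n + 1))) a (σ b * a - c * b) + opev σ f₁ a b := by
  set x := f.coeff (n + 1)
  refine ⟨monomial n (x * (⇑σ)^[n] c) + (f - monomial (n + 1) x), ?_, fun a b => ?_⟩
  · refine natDegree_add_le_of_degree_le (natDegree_monomial_le _) ?_
    rw [natDegree_le_iff_coeff_eq_zero]
    intro m hm
    rw [coeff_sub, coeff_monomial]
    split_ifs with hmn
    · rw [← hmn, sub_self]
    · rw [coeff_eq_zero_of_natDegree_lt (by omega), sub_zero]
  · rw [opev_add, opev_sub, opev_monomial_succ σ c]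
    ring

/-- Right division `f = g · (x - c) + r` in the skew polynomial ring `F[x; σ]`, expressed through
operator evaluation (the product of `F[X]` is the commutative one, so it cannot be used here). -/
theorem exists_opev_eq_opev_X_sub_C_add (c : F) (n : ℕ) {f : F[X]} (hf : f.natDegree ≤ n + 1) :
    ∃ g : F[X], ∃ r : F, g.natDegree ≤ n ∧ g.coeff n = f.coeff (n + 1) ∧
      ∀ a b, opev σ f a b = opev σ g a (σ b * a - c * b) + r * b := by
  induction n generalizing f with
  | zero =>
    obtain ⟨f₁, hf₁, hf⟩ := exists_opev_eq_opev_monomial_add σ c 0 hf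
    refine ⟨C (f.coeff 1), f₁.coeff 0, natDegree_C _ |>.le, coeff_C_zero, fun a b => ?_⟩
    rw [hf, eq_C_of_natDegree_le_zero hf₁, opev_C, monomial_zero_left, coeff_C_zero]
  | succ n ih =>
    obtain ⟨f₁, hf₁, hf⟩ := exists_opev_eq_opev_monomial_add σ c (n + 1) hf
    obtain ⟨g₁, r, hg₁, -, hf₁⟩ := ih hf₁
    refine ⟨monomial (n + 1) (f.coeff (n + 2)) + g₁, r, ?_, ?_, fun a b => ?_⟩
    · exact natDegree_add_le_of_degree_le (natDegree_monomial_le _) (by omega)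
    · rw [coeff_add, coeff_monomial_same,
        coeff_eq_zero_of_natDegree_lt (p := g₁) (by omega), add_zero]
    · rw [hf, hf₁, opev_add]
      ring

lemma mem_ker_opevLinearMap_X_sub_C {c a b : F} :
    b ∈ LinearMap.ker (opevLinearMap σ (X - C c) a) ↔ σ b * a = c * b := by
  rw [LinearMap.mem_ker, opevLinearMap_apply, opev_X_sub_C, sub_eq_zero]

lemma finrank_ker_opevLinearMap_X_sub_C_le_one (c : F) {a : F} (ha : a ≠ 0) :
    finrank (fixedSubfield σ) (LinearMap.ker (opevLinearMap σ (X - C c) a)) ≤ 1 := by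
  by_cases hbot : LinearMap.ker (opevLinearMap σ (X - C c) a) = ⊥
  · rw [hbot, finrank_bot]
    exact zero_le_one
  obtain ⟨x, hx, hx0⟩ := Submodule.exists_mem_ne_zero_of_ne_bot hbot
  rw [mem_ker_opevLinearMap_X_sub_C] at hx
  have hσx : σ x ≠ 0 := (map_ne_zero σ).2 hx0
  have hc : c ≠ 0 := by
    rintro rfl
    exact mul_ne_zero hσx ha (by rw [hx, zero_mul])
  refine (Submodule.finrank_mono fun y hy => ?_).trans (finrank_span_singleton hx0).le
  rw [mem_ker_opevLinearMap_X_sub_C] at hy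
  have hfix : σ (y * x⁻¹) = y * x⁻¹ := by
    have : σ y * x = y * σ x :=
      mul_left_cancel₀ (mul_ne_zero hc ha) (by linear_combination c * x * hy - c * y * hx)
    rw [map_mul, map_inv₀]
    field_simp
    linear_combination this
  refine Submodule.mem_span_singleton.2 ⟨⟨y * x⁻¹, hfix⟩, ?_⟩
  change y * x⁻¹ * x = y
  field_simp

lemma conj_of_mem_ker_opevLinearMap_X_sub_C {c a a' x y : F} (hx : x ≠ 0) (hy : y ≠ 0)
    (hxa : σ x * a = c * x) (hya : σ y * a' = c * y) : σ (x * y⁻¹) * a * (x * y⁻¹)⁻¹ = a' := by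
  have hσy : σ y ≠ 0 := (map_ne_zero σ).2 hy
  rw [map_mul, map_inv₀]
  field_simp
  linear_combination y * hxa - x * hya

lemma sum_finrank_ker_opevLinearMap_X_sub_C_le_one {ι : Type*} [Fintype ι] (a : ι → F)
    (ha0 : ∀ i, a i ≠ 0)
    (hconj : ∀ i j, i ≠ j → ¬ ∃ e : F, e ≠ 0 ∧ σ e * a i * e⁻¹ = a j) (c : F) :
    ∑ i, finrank (fixedSubfield σ) (LinearMap.ker (opevLinearMap σ (X - C c) (a i))) ≤ 1 := by
  classical
  by_cases hall : ∀ i, LinearMap.ker (opevLinearMap σ (X - C c) (a i)) = ⊥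
  · rw [Finset.sum_eq_zero fun i _ => by rw [hall i, finrank_bot]]
    exact zero_le_one
  obtain ⟨i, hi⟩ := not_forall.1 hall
  obtain ⟨y, hy, hy0⟩ := Submodule.exists_mem_ne_zero_of_ne_bot hi
  rw [Finset.sum_eq_single i]
  · exact finrank_ker_opevLinearMap_X_sub_C_le_one σ c (ha0 i)
  · intro j _ hji
    by_cases hbot : LinearMap.ker (opevLinearMap σ (X - C c) (a j)) = ⊥
    · rw [hbot, finrank_bot]
    obtain ⟨x, hx, hx0⟩ := Submodule.exists_mem_ne_zero_of_ne_bot hbot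
    rw [mem_ker_opevLinearMap_X_sub_C] at hx hy
    exact absurd ⟨x * y⁻¹, mul_ne_zero hx0 (inv_ne_zero hy0),
      conj_of_mem_ker_opevLinearMap_X_sub_C σ hx0 hy0 hx hy⟩ (hconj j i hji)
  · simp

lemma ker_opevLinearMap_C {x : F} (hx : x ≠ 0) (a : F) :
    LinearMap.ker (opevLinearMap σ (C x) a) = ⊥ := by
  refine (Submodule.eq_bot_iff _).2 fun b hb => ?_
  rw [LinearMap.mem_ker, opevLinearMap_apply, opev_C] at hb
  exact (mul_eq_zero.1 hb).resolve_left hx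

theorem sum_finrank_ker_opevLinearMap_le_natDegree [Finite F] {ι : Type*} [Fintype ι]
    (a : ι → F) (ha0 : ∀ i, a i ≠ 0)
    (hconj : ∀ i j, i ≠ j → ¬ ∃ e : F, e ≠ 0 ∧ σ e * a i * e⁻¹ = a j) {f : F[X]} (hf : f ≠ 0) :
    ∑ i, finrank (fixedSubfield σ) (LinearMap.ker (opevLinearMap σ f (a i))) ≤ f.natDegree := by
  induction hd : f.natDegree generalizing f with
  | zero =>
    rw [eq_C_of_natDegree_eq_zero hd] at hf ⊢
    have hx : f.coeff 0 ≠ 0 := fun h => hf (by rw [h, C_0])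
    refine (Finset.sum_eq_zero fun i _ => ?_).le
    rw [ker_opevLinearMap_C σ hx, finrank_bot]
  | succ d ih =>
    by_cases hall : ∀ i, LinearMap.ker (opevLinearMap σ f (a i)) = ⊥
    · rw [Finset.sum_eq_zero fun i _ => by rw [hall i, finrank_bot]]
      exact Nat.zero_le _
    obtain ⟨i, hi⟩ := not_forall.1 hall
    obtain ⟨β, hβ, hβ0⟩ := Submodule.exists_mem_ne_zero_of_ne_bot hi
    set c := σ β * a i * β⁻¹
    obtain ⟨g, r, hgd, hgc, hfg⟩ := exists_opev_eq_opev_X_sub_C_add σ c d hd.le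
    have hgc0 : g.coeff d ≠ 0 := by
      rw [hgc, ← hd]
      exact mt leadingCoeff_eq_zero.1 hf
    have hg0 : g ≠ 0 := fun h => hgc0 (by rw [h, coeff_zero])
    have hgd : g.natDegree = d := hgd.antisymm (le_natDegree_of_ne_zero hgc0)
    have hr : r = 0 := by
      have h := hfg (a i) β
      have hβc : σ β * a i - c * β = 0 := by
        simp only [c]
        field_simp
        ring
      rw [show opev σ f (a i) β = 0 from hβ, hβc, opev_at_zero, zero_add, eq_comm] at h
      exact (mul_eq_zero.1 h).resolve_right hβ0
    have hcomp : ∀ j, LinearMap.ker (opevLinearMap σ f (a j)) =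
        (LinearMap.ker (opevLinearMap σ g (a j))).comap (opevLinearMap σ (X - C c) (a j)) := by
      intro j
      ext b
      simp only [LinearMap.mem_ker, Submodule.mem_comap, opevLinearMap_apply, opev_X_sub_C,
        hfg, hr, zero_mul, add_zero]
    calc ∑ j, finrank (fixedSubfield σ) (LinearMap.ker (opevLinearMap σ f (a j)))
        ≤ ∑ j, (finrank (fixedSubfield σ) (LinearMap.ker (opevLinearMap σ g (a j))) +
            finrank (fixedSubfield σ) (LinearMap.ker (opevLinearMap σ (X - C c) (a j)))) :=
          Finset.sum_le_sum fun j _ => (hcomp j).symm ▸ LinearMap.finrank_comap_le _ _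
      _ = _ := Finset.sum_add_distrib
      _ ≤ d + 1 := add_le_add (ih hg0 hgd)
          (sum_finrank_ker_opevLinearMap_X_sub_C_le_one σ a ha0 hconj c)

theorem exists_ne_zero_degree_lt_opev_eq_zero {κ : Type*} [Fintype κ]
    (A B : κ → F) {k : ℕ} (hk : Fintype.card κ < k) :
    ∃ f : F[X], f ≠ 0 ∧ f.degree < k ∧ ∀ p, opev σ f (A p) (B p) = 0 := by
  let Φ : degreeLT F k →ₗ[F] (κ → F) :=
    LinearMap.pi (fun p => lopev σ (A p) (B p)) ∘ₗ (degreeLT F k).subtype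
  have hdim : finrank F (κ → F) < finrank F (degreeLT F k) := by
    rwa [(degreeLTEquiv F k).finrank_eq, finrank_fin_fun, finrank_fintype_fun_eq_card]
  obtain ⟨⟨f, hfk⟩, hf, hf0⟩ :=
    Submodule.exists_mem_ne_zero_of_ne_bot (LinearMap.ker_ne_bot_of_finrank_lt hdim)
  exact ⟨f, fun h => hf0 (Subtype.ext h), mem_degreeLT.1 hfk,
    congrFun (LinearMap.mem_ker.1 hf : Φ ⟨f, hfk⟩ = 0)⟩

end OperatorEvaluation

section FoldedCode

variable {F : Type*} [Field F] (σ : F ≃+* F) {ι : Type*} (h : ℕ) (Nv : ι → ℕ)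

noncomputable def foldedCodeword (γ : F) (a : ι → F) (f : F[X]) :
    ∀ i, Matrix (Fin h) (Fin (Nv i)) F :=
  fun i r c => opev σ f (a i) (γ ^ (c.1 * h + r.1))

lemma foldedCodeword_sub (γ : F) (a : ι → F) (f g : F[X]) (i : ι) :
    foldedCodeword σ h Nv γ a (f - g) i =
      foldedCodeword σ h Nv γ a f i - foldedCodeword σ h Nv γ a g i := by
  ext r c
  exact opev_sub σ f g _ _

theorem mul_sub_sum_colRank_foldedCodeword_le_natDegree [Finite F] [Fintype ι]
    (hnm : ∀ i, h * Nv i ≤ finrank (fixedSubfield σ) F)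
    {γ : F} (hγ : ∀ x : F, x ≠ 0 → ∃ j : ℕ, x = γ ^ j) {a : ι → F} (ha0 : ∀ i, a i ≠ 0)
    (hconj : ∀ i j, i ≠ j → ¬ ∃ e : F, e ≠ 0 ∧ σ e * a i * e⁻¹ = a j) {f : F[X]} (hf : f ≠ 0) :
    h * (∑ i, Nv i - ∑ i, colRank σ (foldedCodeword σ h Nv γ a f i)) ≤ f.natDegree := by
  have hblock : ∀ i, h * (Nv i - colRank σ (foldedCodeword σ h Nv γ a f i)) ≤
      finrank (fixedSubfield σ) (LinearMap.ker (opevLinearMap σ f (a i))) := fun i =>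
    mul_sub_finrank_span_cols_le_finrank_ker _
      (linearIndependent_pow_mul_add (adjoin_simple_eq_top_of_forall_eq_pow hγ) (hnm i)) _
      fun _ _ => rfl
  calc h * (∑ i, Nv i - ∑ i, colRank σ (foldedCodeword σ h Nv γ a f i))
      ≤ h * ∑ i, (Nv i - colRank σ (foldedCodeword σ h Nv γ a f i)) := by
        gcongr
        rw [tsub_le_iff_right, ← Finset.sum_add_distrib]
        exact Finset.sum_le_sum fun i _ => le_tsub_add
    _ = ∑ i, h * (Nv i - colRank σ (foldedCodeword σ h Nv γ a f i)) := Finset.mul_sum _ _ _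
    _ ≤ ∑ i, finrank (fixedSubfield σ) (LinearMap.ker (opevLinearMap σ f (a i))) :=
        Finset.sum_le_sum fun i _ => hblock i
    _ ≤ f.natDegree := sum_finrank_ker_opevLinearMap_le_natDegree σ a ha0 hconj hf

lemma sum_colRank_le_sum_sub_card [Fintype ι] (X : ∀ i, Matrix (Fin h) (Fin (Nv i)) F)
    (S : Finset (Σ i, Fin (Nv i))) (hS : ∀ p ∈ S, ∀ r, X p.1 r p.2 = 0) :
    ∑ i, colRank σ (X i) ≤ ∑ i, Nv i - #S := by
  classical
  let T : ∀ i, Finset (Fin (Nv i)) := fun i => {c | ⟨i, c⟩ ∉ S}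
  have hT : univ.sigma T = Sᶜ := by
    ext ⟨i, c⟩
    simp [T]
  calc ∑ i, colRank σ (X i) ≤ ∑ i, #(T i) := Finset.sum_le_sum fun i _ =>
        finrank_span_range_le_card _ _ fun c hc =>
          funext fun r => hS _ (by simpa [T] using hc) r
    _ = ∑ i, Nv i - #S := by
        rw [← card_sigma, hT, card_compl, Fintype.card_sigma]
        simp

theorem sub_add_one_le_sum_colRank_foldedCodeword [Finite F] [Fintype ι] {t : ℕ}
    (htN : t ≤ ∑ i, Nv i) (hnm : ∀ i, h * Nv i ≤ finrank (fixedSubfield σ) F)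
    {γ : F} (hγ : ∀ x : F, x ≠ 0 → ∃ j : ℕ, x = γ ^ j) {a : ι → F} (ha0 : ∀ i, a i ≠ 0)
    (hconj : ∀ i j, i ≠ j → ¬ ∃ e : F, e ≠ 0 ∧ σ e * a i * e⁻¹ = a j) {f : F[X]} (hf : f ≠ 0)
    (hdeg : f.degree < ↑(h * t)) :
    ∑ i, Nv i - t + 1 ≤ ∑ i, colRank σ (foldedCodeword σ h Nv γ a f i) := by
  have hbound := (mul_sub_sum_colRank_foldedCodeword_le_natDegree σ h Nv hnm hγ ha0 hconj
    hf).trans_lt ((natDegree_lt_iff_degree_lt hf).2 hdeg)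
  have := Nat.lt_of_mul_lt_mul_left hbound
  omega

theorem exists_sum_colRank_foldedCodeword_le [Fintype ι] {t : ℕ} (hh : 0 < h) (ht : 0 < t)
    (htN : t ≤ ∑ i, Nv i) (γ : F) (a : ι → F) :
    ∃ f : F[X], f ≠ 0 ∧ f.degree < ↑(h * t) ∧
      ∑ i, colRank σ (foldedCodeword σ h Nv γ a f i) ≤ ∑ i, Nv i - (t - 1) := by
  obtain ⟨S, -, hS⟩ := exists_subset_card_eq (s := (univ : Finset (Σ i, Fin (Nv i))))
    (n := t - 1) (by simp only [card_univ, Fintype.card_sigma, Fintype.card_fin]; omega)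
  obtain ⟨f, hf0, hdeg, hzero⟩ := exists_ne_zero_degree_lt_opev_eq_zero σ
    (fun p : S × Fin h => a p.1.1.1) (fun p => γ ^ (p.1.1.2.1 * h + p.2.1)) (k := h * t) (by
      rw [Fintype.card_prod, Fintype.card_coe, hS, Fintype.card_fin, mul_comm]
      exact Nat.mul_lt_mul_of_pos_left (by omega) hh)
  refine ⟨f, hf0, hdeg, ?_⟩
  rw [← hS]
  exact sum_colRank_le_sum_sub_card σ h Nv _ S fun p hp r => hzero (⟨p, hp⟩, r)

end FoldedCode

theorem stmt_8_general (F : Type*) [Field F] [Fintype F] (σ : F ≃+* F)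
    (ℓ h k : ℕ) (hh : 0 < h) (hk : 0 < k)
    (Nv : Fin ℓ → ℕ)
    (hkN : k ≤ h * ∑ i, Nv i) (hdvd : h ∣ k)
    (hnm : ∀ i, h * Nv i ≤ Module.finrank (fixedSubfield σ) F)
    (γ : F) (hprim : ∀ x : F, x ≠ 0 → ∃ j : ℕ, x = γ ^ j)
    (a : Fin ℓ → F) (ha0 : ∀ i, a i ≠ 0)
    (hconj : ∀ i i' : Fin ℓ, i ≠ i' →
      ¬ ∃ c : F, c ≠ 0 ∧ σ c * a i * c⁻¹ = a i') :
    IsLeast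
      {w : ℕ |
        ∃ X ∈ {X : ∀ i : Fin ℓ, Matrix (Fin h) (Fin (Nv i)) F |
            ∃ f : Polynomial F, f.degree < (k : ℕ) ∧
              ∀ i r c, X i r c = opev σ f (a i) (γ ^ (c.1 * h + r.1))},
        ∃ Y ∈ {X : ∀ i : Fin ℓ, Matrix (Fin h) (Fin (Nv i)) F |
            ∃ f : Polynomial F, f.degree < (k : ℕ) ∧
              ∀ i r c, X i r c = opev σ f (a i) (γ ^ (c.1 * h + r.1))},
        X ≠ Y ∧ w = ∑ i, colRank σ (X i - Y i)}
      ((∑ i, Nv i) - k / h + 1) := by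
  obtain ⟨t, rfl⟩ := hdvd
  rw [Nat.mul_div_cancel_left t hh]
  have ht : 0 < t := Nat.pos_of_mul_pos_left hk
  have htN : t ≤ ∑ i, Nv i := Nat.le_of_mul_le_mul_left hkN hh
  constructor
  · obtain ⟨f, hf0, hdeg, hupper⟩ := exists_sum_colRank_foldedCodeword_le σ h Nv hh ht htN γ a
    have hlow := sub_add_one_le_sum_colRank_foldedCodeword σ h Nv htN hnm hprim ha0 hconj hf0 hdeg
    refine ⟨foldedCodeword σ h Nv γ a f, ⟨f, hdeg, fun _ _ _ => rfl⟩, 0,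
      ⟨0, by rw [degree_zero]; exact WithBot.bot_lt_coe _, fun _ _ _ => (opev_zero σ _ _).symm⟩,
      fun h0 => ?_, ?_⟩
    · simp only [h0, Pi.zero_apply, colRank_zero, sum_const_zero] at hlow
      omega
    · simp only [Pi.zero_apply, sub_zero]
      omega
  · rintro w ⟨X, ⟨f₁, hf₁, hX⟩, Y, ⟨f₂, hf₂, hY⟩, hXY, rfl⟩
    obtain rfl : X = foldedCodeword σ h Nv γ a f₁ := funext fun i => funext fun r => funext (hX i r)
    obtain rfl : Y = foldedCodeword σ h Nv γ a f₂ := funext fun i => funext fun r => funext (hY i r)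
    simp only [← foldedCodeword_sub]
    exact sub_add_one_le_sum_colRank_foldedCodeword σ h Nv htN hnm hprim ha0 hconj
      (sub_ne_zero.2 fun h => hXY (by rw [h])) ((degree_sub_le _ _).trans_lt (max_lt hf₁ hf₂))

/-- A folded linearized Reed–Solomon code with the same folding parameter `h` for all
blocks and `h ∣ k` has minimum sum-rank distance `N − k/h + 1`, i.e. it is MSRD. -/
theorem stmt_8 (F : Type*) [Field F] [Fintype F] (σ : F ≃+* F)
    (ℓ h k : ℕ) (hℓ : 0 < ℓ) (hh : 0 < h) (hk : 0 < k)
    (Nv : Fin ℓ → ℕ) (hNpos : ∀ i, 0 < Nv i)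
    (hkN : k ≤ h * ∑ i, Nv i) (hdvd : h ∣ k)
    (hNh : ∀ i, Nv i ≤ h)
    (hnm : ∀ i, h * Nv i ≤ Module.finrank (fixedSubfield σ) F)
    (γ : F) (hγ0 : γ ≠ 0) (hprim : ∀ x : F, x ≠ 0 → ∃ j : ℕ, x = γ ^ j)
    (a : Fin ℓ → F) (ha0 : ∀ i, a i ≠ 0)
    (hconj : ∀ i i' : Fin ℓ, i ≠ i' →
      ¬ ∃ c : F, c ≠ 0 ∧ σ c * a i * c⁻¹ = a i') :
    IsLeast
      {w : ℕ |
        ∃ X ∈ {X : ∀ i : Fin ℓ, Matrix (Fin h) (Fin (Nv i)) F |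
            ∃ f : Polynomial F, f.degree < (k : ℕ) ∧
              ∀ i r c, X i r c = opev σ f (a i) (γ ^ (c.1 * h + r.1))},
        ∃ Y ∈ {X : ∀ i : Fin ℓ, Matrix (Fin h) (Fin (Nv i)) F |
            ∃ f : Polynomial F, f.degree < (k : ℕ) ∧
              ∀ i r c, X i r c = opev σ f (a i) (γ ^ (c.1 * h + r.1))},
        X ≠ Y ∧ w = ∑ i, colRank σ (X i - Y i)}
      ((∑ i, Nv i) - k / h + 1) :=
  stmt_8_general F σ ℓ h k hh hk Nv hkN hdvd hnm γ hprim a ha0 hconj
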